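/- Fix m ≥ 1, d ≥ 1, n ≥ 0 and ω = exp(2πi/d). The assignment sending Π to the tuple (A₁, …, Aₙ) with A_i = ∑_{a ∈ (ZMod d)^n} ω^{a_i} · Π(a) is a bijection from the set of projective measurements Π : (ZMod d)^n → M_m(ℂ) — i.e., functions such that each Π(a) is a Hermitian idempotent, Π(a)·Π(a') = 0 for a ≠ a', and ∑_a Π(a) = 1 — onto the set of n-tuples (A₁, …, Aₙ) of pairwise commuting m×m complex unitary matrices with A_i^d = 1 for all i. The inverse sends (A₁, …, Aₙ) to the simultaneous spectral projections, where Π(a) projects onto the joint eigenspace with eigenvalues (ω^{a₁}, …, ω^{aₙ}). (This is the level-n statement of the simplicial isomorphism N(Z_d, U(H)) ≅ P_H N(Z_d) induced by spectral decomposition.) -/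

import Mathlib

open Matrix Finset

noncomputable def rootOfUnity' (d : ℕ) : ℂ :=
  Complex.exp (2 * Real.pi * Complex.I / d)

def ProjectiveMeasurements (m n d : ℕ) [NeZero d] :
    Set ((Fin n → ZMod d) → Matrix (Fin m) (Fin m) ℂ) :=
  {P | (∀ a, (P a).IsHermitian ∧ P a * P a = P a) ∧
       (∀ a a', a ≠ a' → P a * P a' = 0) ∧
       (∑ a : Fin n → ZMod d, P a = 1)}

def CommutingTorsionTuples (m n d : ℕ) :
    Set (Fin n → Matrix (Fin m) (Fin m) ℂ) :=
  {A | (∀ i, A i ∈ Matrix.unitaryGroup (Fin m) ℂ ∧ (A i) ^ d = 1) ∧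
       (∀ i j, A i * A j = A j * A i)}

/-!
The argument works in any complex *-algebra; `ω ^ a` is encoded as `ZMod.stdAddChar a`.

If the `P a` are orthogonal projections summing to `1`, then `f ↦ ∑ a, f a • P a` is a
unital *-homomorphism from functions to the algebra, so the images of the characters
`a ↦ ω ^ aᵢ` are commuting unitaries of order dividing `d`. Two measurements with the same
image agree: the characters separate outcomes, which forces `P x * Q y = 0` for `x ≠ y`, and
then `P b = P b * Q b = Q b`.

Conversely, for a unitary `U` with `U ^ d = 1`, the discrete Fourier transform of `j ↦ U ^ j`,
scaled by `1 / d`, gives the spectral projections `S k`: Fourier inversion yields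
`∑ k, S k = 1` and `∑ k, ω ^ k • S k = U`, and `U * S k = ω ^ k • S k` together with the
orthogonality of characters yields `S k' * S k = 0` for `k ≠ k'` and `S k * S k = S k`. For a
commuting tuple the products of the spectral projections of its members form a measurement,
by induction on the length of the tuple, and it is mapped back to the tuple.
-/

open ZMod (stdAddChar)

section PowVal

variable {M : Type*} [Monoid M] {d : ℕ} {x : M}

lemma pow_val_add_of_pow_eq_one [NeZero d] (hx : x ^ d = 1) (a b : ZMod d) :
    x ^ (a + b).val = x ^ a.val * x ^ b.val := by
  rw [ZMod.val_add, ← pow_eq_pow_mod _ hx, pow_add]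

lemma pow_val_one_of_pow_eq_one (hx : x ^ d = 1) : x ^ (1 : ZMod d).val = x := by
  rw [ZMod.val_one_eq_one_mod, ← pow_eq_pow_mod _ hx, pow_one]

lemma star_pow_val_of_mem_unitary [NeZero d] [StarMul M] (hu : x ∈ unitary M) (hx : x ^ d = 1)
    (j : ZMod d) : star (x ^ j.val) = x ^ (-j).val :=
  calc star (x ^ j.val) = star (x ^ j.val) * (x ^ j.val * x ^ (-j).val) := by
        rw [← pow_val_add_of_pow_eq_one hx, add_neg_cancel, ZMod.val_zero, pow_zero, mul_one]
    _ = x ^ (-j).val := by rw [← mul_assoc, Unitary.star_mul_self_of_mem (pow_mem hu _), one_mul]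

end PowVal

section StdAddChar

variable {d : ℕ} [NeZero d]

lemma star_stdAddChar_mul_self (a : ZMod d) : star (stdAddChar a) * stdAddChar a = 1 := by
  rw [Complex.star_def, ← AddChar.map_neg_eq_conj, ← AddChar.map_add_eq_mul, neg_add_cancel,
    AddChar.map_zero_eq_one]

lemma stdAddChar_pow_self (a : ZMod d) : stdAddChar a ^ d = 1 := by
  rw [← AddChar.map_nsmul_eq_pow, nsmul_eq_mul, ZMod.natCast_self, zero_mul,
    AddChar.map_zero_eq_one]

end StdAddChar

section ProductSums

variable {R : Type*} [Ring R] [Algebra ℂ R] {ι κ : Type*} [Fintype ι] [Fintype κ]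
  {P : ι → R} {Q : κ → R}

lemma sum_smul_fst_mul_snd (hQ : ∑ b, Q b = 1) (f : ι → ℂ) :
    ∑ p : ι × κ, f p.1 • (P p.1 * Q p.2) = ∑ a, f a • P a := by
  simp only [Fintype.sum_prod_type, ← Finset.smul_sum, ← Finset.mul_sum, hQ, mul_one]

lemma sum_smul_snd_mul_fst (hP : ∑ a, P a = 1) (g : κ → ℂ) :
    ∑ p : ι × κ, g p.2 • (P p.1 * Q p.2) = ∑ b, g b • Q b := by
  simp only [Fintype.sum_prod_type_right, ← Finset.smul_sum, ← Finset.sum_mul, hP, one_mul]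

end ProductSums

section Measurements

variable {R : Type*} [Ring R] [StarRing R]

structure IsProjectiveMeasurement {ι : Type*} [Fintype ι] (P : ι → R) : Prop where
  isSelfAdjoint : ∀ a, IsSelfAdjoint (P a)
  isIdempotentElem : ∀ a, IsIdempotentElem (P a)
  mul_eq_zero : Pairwise fun a b => P a * P b = 0
  sum_eq_one : ∑ a, P a = 1

structure IsCommutingTorsionUnitaryFamily {ι : Type*} (d : ℕ) (A : ι → R) : Prop where
  mem_unitary : ∀ i, A i ∈ unitary R
  pow_eq_one : ∀ i, A i ^ d = 1
  commute : ∀ i j, Commute (A i) (A j)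

lemma IsCommutingTorsionUnitaryFamily.comp {ι κ : Type*} {d : ℕ} {A : ι → R}
    (hA : IsCommutingTorsionUnitaryFamily d A) (e : κ → ι) :
    IsCommutingTorsionUnitaryFamily d (A ∘ e) :=
  ⟨fun i => hA.mem_unitary (e i), fun i => hA.pow_eq_one (e i),
    fun i j => hA.commute (e i) (e j)⟩

namespace IsProjectiveMeasurement

variable {ι κ : Type*} [Fintype ι] {P : ι → R}

lemma comp_equiv [Fintype κ] (hP : IsProjectiveMeasurement P) (e : κ ≃ ι) :
    IsProjectiveMeasurement (P ∘ e) where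
  isSelfAdjoint a := hP.isSelfAdjoint (e a)
  isIdempotentElem a := hP.isIdempotentElem (e a)
  mul_eq_zero _ _ hab := hP.mul_eq_zero (e.injective.ne hab)
  sum_eq_one := by rw [← hP.sum_eq_one]; exact e.sum_comp P

lemma mul_of_commute [Fintype κ] {Q : κ → R} (hP : IsProjectiveMeasurement P)
    (hQ : IsProjectiveMeasurement Q) (hPQ : ∀ a b, Commute (P a) (Q b)) :
    IsProjectiveMeasurement fun p : ι × κ => P p.1 * Q p.2 where
  isSelfAdjoint p :=
    ((hP.isSelfAdjoint p.1).commute_iff (hQ.isSelfAdjoint p.2)).1 (hPQ p.1 p.2)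
  isIdempotentElem p :=
    (hP.isIdempotentElem p.1).mul_of_commute (hPQ p.1 p.2) (hQ.isIdempotentElem p.2)
  mul_eq_zero p p' hpp' := by
    show P p.1 * Q p.2 * (P p'.1 * Q p'.2) = 0
    rw [mul_assoc, ← mul_assoc (Q p.2), ← (hPQ p'.1 p.2).eq, mul_assoc, ← mul_assoc]
    by_cases h : p.1 = p'.1
    · rw [hQ.mul_eq_zero fun h' => hpp' (Prod.ext h h'), mul_zero]
    · rw [hP.mul_eq_zero h, zero_mul]
  sum_eq_one := by
    rw [Fintype.sum_prod_type, ← Finset.sum_mul_sum, hP.sum_eq_one, hQ.sum_eq_one, one_mul]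

variable [Algebra ℂ R]

lemma mul_sum_smul [DecidableEq ι] (hP : IsProjectiveMeasurement P) (f : ι → ℂ) (b : ι) :
    P b * ∑ a, f a • P a = f b • P b := by
  rw [Finset.mul_sum, Finset.sum_eq_single b]
  · rw [mul_smul_comm, (hP.isIdempotentElem b).eq]
  · intro a _ hab
    rw [mul_smul_comm, hP.mul_eq_zero hab.symm, smul_zero]
  · simp

lemma sum_smul_mul [DecidableEq ι] (hP : IsProjectiveMeasurement P) (f : ι → ℂ) (b : ι) :
    (∑ a, f a • P a) * P b = f b • P b := by
  rw [Finset.sum_mul, Finset.sum_eq_single b]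
  · rw [smul_mul_assoc, (hP.isIdempotentElem b).eq]
  · intro a _ hab
    rw [smul_mul_assoc, hP.mul_eq_zero hab, smul_zero]
  · simp

lemma sum_smul_mul_sum_smul (hP : IsProjectiveMeasurement P) (f g : ι → ℂ) :
    (∑ a, f a • P a) * ∑ a, g a • P a = ∑ a, (f a * g a) • P a := by
  classical
  simp only [Finset.sum_mul, smul_mul_assoc, hP.mul_sum_smul, smul_smul]

lemma sum_smul_pow (hP : IsProjectiveMeasurement P) (f : ι → ℂ) (k : ℕ) :
    (∑ a, f a • P a) ^ k = ∑ a, f a ^ k • P a := by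
  induction k with
  | zero => simp [hP.sum_eq_one]
  | succ k ih => simp only [pow_succ, ih, hP.sum_smul_mul_sum_smul]

lemma star_sum_smul [StarModule ℂ R] (hP : IsProjectiveMeasurement P) (f : ι → ℂ) :
    star (∑ a, f a • P a) = ∑ a, star (f a) • P a := by
  simp only [star_sum, star_smul, (hP.isSelfAdjoint _).star_eq]

lemma sum_smul_mem_unitary [StarModule ℂ R] (hP : IsProjectiveMeasurement P) {f : ι → ℂ}
    (hf : ∀ a, star (f a) * f a = 1) : ∑ a, f a • P a ∈ unitary R := by
  have hf' : ∀ a, f a * star (f a) = 1 := fun a => (mul_comm _ _).trans (hf a)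
  simp only [Unitary.mem_iff, hP.star_sum_smul, hP.sum_smul_mul_sum_smul, hf, hf', one_smul,
    hP.sum_eq_one, and_self]

lemma sum_smul_pow_eq_one (hP : IsProjectiveMeasurement P) {f : ι → ℂ} {k : ℕ}
    (hf : ∀ a, f a ^ k = 1) : (∑ a, f a • P a) ^ k = 1 := by
  simp only [hP.sum_smul_pow, hf, one_smul, hP.sum_eq_one]

lemma commute_sum_smul (hP : IsProjectiveMeasurement P) (f g : ι → ℂ) :
    Commute (∑ a, f a • P a) (∑ a, g a • P a) := by
  simp only [Commute, SemiconjBy, hP.sum_smul_mul_sum_smul, mul_comm]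

lemma eq_of_sum_smul_eq {Q : ι → R} (hP : IsProjectiveMeasurement P)
    (hQ : IsProjectiveMeasurement Q) (f : κ → ι → ℂ)
    (hf : Pairwise fun x y => ∃ i, f i x ≠ f i y)
    (h : ∀ i, ∑ a, f i a • P a = ∑ a, f i a • Q a) : P = Q := by
  classical
  have orth : Pairwise fun x y => P x * Q y = 0 := by
    intro x y hxy
    obtain ⟨i, hi⟩ := hf hxy
    have : f i x • (P x * Q y) = f i y • (P x * Q y) := by
      rw [← smul_mul_assoc, ← hP.mul_sum_smul, mul_assoc, h i, hQ.sum_smul_mul, mul_smul_comm]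
    exact (smul_eq_zero.1 (by rw [sub_smul, this, sub_self])).resolve_left (sub_ne_zero.2 hi)
  funext b
  calc P b = P b * ∑ a, Q a := by rw [hQ.sum_eq_one, mul_one]
    _ = P b * Q b := by
      rw [Finset.mul_sum, Finset.sum_eq_single b (fun a _ hab => orth (Ne.symm hab)) (by simp)]
    _ = (∑ a, P a) * Q b := by
      rw [Finset.sum_mul, Finset.sum_eq_single b (fun a _ hab => orth hab) (by simp)]
    _ = Q b := by rw [hP.sum_eq_one, one_mul]

end IsProjectiveMeasurement

lemma IsProjectiveMeasurement.isCommutingTorsionUnitaryFamily_sum_stdAddChar_smul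
    [Algebra ℂ R] [StarModule ℂ R] {ι : Type*} [Fintype ι] [DecidableEq ι] {d : ℕ} [NeZero d]
    {P : (ι → ZMod d) → R} (hP : IsProjectiveMeasurement P) :
    IsCommutingTorsionUnitaryFamily d fun i => ∑ a, stdAddChar (a i) • P a :=
  ⟨fun i => hP.sum_smul_mem_unitary fun a => star_stdAddChar_mul_self (a i),
    fun i => hP.sum_smul_pow_eq_one fun a => stdAddChar_pow_self (a i),
    fun _ _ => hP.commute_sum_smul _ _⟩

end Measurements

section SpectralProj

variable {R : Type*} [Ring R] [Algebra ℂ R] {d : ℕ} [NeZero d] {U : R}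

/-- For `U ^ d = 1`, the projection onto the `ω ^ k`-eigenspace of `U`:
`(1 / d) • ∑ j, ω ^ (-j k) • U ^ j`. -/
noncomputable def spectralProj (d : ℕ) [NeZero d] (U : R) (k : ZMod d) : R :=
  (d : ℂ)⁻¹ • ZMod.dft (fun j : ZMod d => U ^ j.val) k

lemma sum_stdAddChar_mul_smul_spectralProj (U : R) (j : ZMod d) :
    ∑ k, stdAddChar (k * j) • spectralProj d U k = U ^ j.val := by
  have := congrFun (ZMod.dft.symm_apply_apply fun j : ZMod d => U ^ j.val) j
  rw [ZMod.invDFT_apply, Finset.smul_sum] at this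
  simpa only [spectralProj, smul_comm (stdAddChar _) (d : ℂ)⁻¹] using this

lemma sum_spectralProj (U : R) : ∑ k, spectralProj d U k = 1 := by
  simpa using sum_stdAddChar_mul_smul_spectralProj U (0 : ZMod d)

lemma sum_stdAddChar_smul_spectralProj (hU : U ^ d = 1) :
    ∑ k, stdAddChar k • spectralProj d U k = U := by
  simpa [pow_val_one_of_pow_eq_one hU] using sum_stdAddChar_mul_smul_spectralProj U (1 : ZMod d)

lemma mul_spectralProj (hU : U ^ d = 1) (k : ZMod d) :
    U * spectralProj d U k = stdAddChar k • spectralProj d U k := by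
  have shift : ∀ j : ZMod d, stdAddChar (-(j * k)) • (U * U ^ j.val)
      = stdAddChar k • stdAddChar (-((1 + j) * k)) • U ^ (1 + j).val := by
    intro j
    rw [pow_val_add_of_pow_eq_one hU, pow_val_one_of_pow_eq_one hU, smul_smul,
      ← AddChar.map_add_eq_mul]
    congr 2
    ring
  simp only [spectralProj, ZMod.dft_apply, mul_smul_comm, Finset.mul_sum, shift,
    ← Finset.smul_sum]
  rw [smul_comm (stdAddChar k)]
  congr 2
  exact Fintype.sum_equiv (Equiv.addLeft 1) _ _ fun _ => rfl

lemma pow_mul_spectralProj (hU : U ^ d = 1) (n : ℕ) (k : ZMod d) :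
    U ^ n * spectralProj d U k = stdAddChar k ^ n • spectralProj d U k := by
  induction n with
  | zero => simp
  | succ n ih =>
    rw [pow_succ', mul_assoc, ih, mul_smul_comm, mul_spectralProj hU, smul_smul, pow_succ]

lemma spectralProj_mul_spectralProj (hU : U ^ d = 1) (k k' : ZMod d) :
    spectralProj d U k' * spectralProj d U k = if k = k' then spectralProj d U k else 0 := by
  have hsum : ∑ j : ZMod d, stdAddChar (-(j * k')) * stdAddChar k ^ j.val
      = ∑ j : ZMod d, stdAddChar (j * (k - k')) := by
    refine Finset.sum_congr rfl fun j _ => ?_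
    rw [← AddChar.map_nsmul_eq_pow, nsmul_eq_mul, ZMod.natCast_zmod_val,
      ← AddChar.map_add_eq_mul]
    ring_nf
  conv_lhs => rw [spectralProj, ZMod.dft_apply]
  rw [smul_mul_assoc, Finset.sum_mul]
  simp only [smul_mul_assoc, pow_mul_spectralProj hU, smul_smul, ← Finset.sum_smul, hsum,
    AddChar.sum_mulShift _ (ZMod.isPrimitive_stdAddChar d), sub_eq_zero, ZMod.card]
  split_ifs <;> simp [NeZero.ne]

lemma commute_spectralProj {B : R} (hB : Commute B U) (k : ZMod d) :
    Commute B (spectralProj d U k) :=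
  (Commute.sum_right _ _ _ fun j _ => (hB.pow_right j.val).smul_right _).smul_right _

lemma isSelfAdjoint_spectralProj [StarRing R] [StarModule ℂ R] (hu : U ∈ unitary R)
    (hU : U ^ d = 1) (k : ZMod d) : IsSelfAdjoint (spectralProj d U k) := by
  rw [isSelfAdjoint_iff, spectralProj, ZMod.dft_apply, star_smul, star_sum]
  simp only [star_smul, star_pow_val_of_mem_unitary hu hU, Complex.star_def, map_inv₀,
    map_natCast, ← AddChar.map_neg_eq_conj, neg_neg]
  congr 1
  exact Fintype.sum_equiv (Equiv.neg _) _ _ fun j => by simp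

lemma isProjectiveMeasurement_spectralProj [StarRing R] [StarModule ℂ R] (hu : U ∈ unitary R)
    (hU : U ^ d = 1) : IsProjectiveMeasurement (spectralProj d U) where
  isSelfAdjoint := isSelfAdjoint_spectralProj hu hU
  isIdempotentElem k := (spectralProj_mul_spectralProj hU k k).trans (if_pos rfl)
  mul_eq_zero k k' h := by simpa [Ne.symm h] using spectralProj_mul_spectralProj hU k' k
  sum_eq_one := sum_spectralProj U

end SpectralProj

section JointSpectralProj

variable {R : Type*} [Ring R] [Algebra ℂ R] {d : ℕ} [NeZero d] {n : ℕ}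

noncomputable def jointSpectralProj (d : ℕ) [NeZero d] {n : ℕ} (A : Fin n → R)
    (a : Fin n → ZMod d) : R :=
  (List.ofFn fun i => spectralProj d (A i) (a i)).prod

lemma jointSpectralProj_succ (A : Fin (n + 1) → R) (a : Fin (n + 1) → ZMod d) :
    jointSpectralProj d A a
      = spectralProj d (A 0) (a 0) * jointSpectralProj d (Fin.tail A) (Fin.tail a) := by
  rw [jointSpectralProj, List.ofFn_succ, List.prod_cons]
  rfl

lemma sum_smul_jointSpectralProj_succ (A : Fin (n + 1) → R)
    (f : (Fin (n + 1) → ZMod d) → ℂ) :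
    ∑ a, f a • jointSpectralProj d A a
      = ∑ p : ZMod d × (Fin n → ZMod d), f (Fin.cons p.1 p.2)
          • (spectralProj d (A 0) p.1 * jointSpectralProj d (Fin.tail A) p.2) :=
  (Fintype.sum_equiv (Fin.consEquiv fun _ => ZMod d) _ _ fun p => by
    rw [jointSpectralProj_succ]; rfl).symm

lemma commute_jointSpectralProj {A : Fin n → R} {B : R} (hB : ∀ i, Commute B (A i))
    (a : Fin n → ZMod d) : Commute B (jointSpectralProj d A a) :=
  Commute.list_prod_right _ _ fun _ hx => by
    obtain ⟨i, rfl⟩ := List.mem_ofFn.1 hx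
    exact commute_spectralProj (hB i) _

variable [StarRing R] [StarModule ℂ R] {A : Fin n → R}

lemma isProjectiveMeasurement_jointSpectralProj (hA : IsCommutingTorsionUnitaryFamily d A) :
    IsProjectiveMeasurement (jointSpectralProj d A) := by
  induction n with
  | zero =>
    refine ⟨fun _ => ?_, fun _ => ?_, fun a b hab => (hab (Subsingleton.elim a b)).elim, ?_⟩ <;>
      simp [jointSpectralProj, IsIdempotentElem]
  | succ n ih =>
    have hS := isProjectiveMeasurement_spectralProj (hA.mem_unitary 0) (hA.pow_eq_one 0)
    have hP : IsProjectiveMeasurement (jointSpectralProj d (Fin.tail A)) := ih (hA.comp _)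
    have hSP : ∀ k b, Commute (spectralProj d (A 0) k) (jointSpectralProj d (Fin.tail A) b) :=
      fun k => commute_jointSpectralProj fun i =>
        (commute_spectralProj (hA.commute i.succ 0) k).symm
    convert (hS.mul_of_commute hP hSP).comp_equiv (Fin.consEquiv fun _ => ZMod d).symm using 1
    funext a
    exact jointSpectralProj_succ A a

lemma sum_stdAddChar_smul_jointSpectralProj (hA : IsCommutingTorsionUnitaryFamily d A)
    (i : Fin n) : ∑ a, stdAddChar (a i) • jointSpectralProj d A a = A i := by
  induction n with
  | zero => exact i.elim0
  | succ n ih =>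
    have hP : IsProjectiveMeasurement (jointSpectralProj d (Fin.tail A)) :=
      isProjectiveMeasurement_jointSpectralProj (hA.comp _)
    rw [sum_smul_jointSpectralProj_succ]
    cases i using Fin.cases with
    | zero =>
      simp only [Fin.cons_zero]
      rw [sum_smul_fst_mul_snd hP.sum_eq_one,
        sum_stdAddChar_smul_spectralProj (hA.pow_eq_one 0)]
    | succ i =>
      simp only [Fin.cons_succ]
      rw [sum_smul_snd_mul_fst (sum_spectralProj (A 0))
        fun b : Fin n → ZMod d => stdAddChar (b i)]
      exact ih (hA.comp _) i

end JointSpectralProj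

lemma rootOfUnity'_pow_val {d : ℕ} [NeZero d] (a : ZMod d) :
    rootOfUnity' d ^ a.val = stdAddChar a := by
  rw [ZMod.stdAddChar_apply, ZMod.toCircle_apply, rootOfUnity', ← Complex.exp_nat_mul]
  ring_nf

lemma mem_projectiveMeasurements_iff {m n d : ℕ} [NeZero d]
    {P : (Fin n → ZMod d) → Matrix (Fin m) (Fin m) ℂ} :
    P ∈ ProjectiveMeasurements m n d ↔ IsProjectiveMeasurement P :=
  ⟨fun ⟨h, horth, hsum⟩ => ⟨fun a => (h a).1.isSelfAdjoint, fun a => (h a).2, horth, hsum⟩,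
    fun hP => ⟨fun a => ⟨hP.isSelfAdjoint a, hP.isIdempotentElem a⟩, hP.mul_eq_zero,
      hP.sum_eq_one⟩⟩

lemma mem_commutingTorsionTuples_iff {m n d : ℕ} {A : Fin n → Matrix (Fin m) (Fin m) ℂ} :
    A ∈ CommutingTorsionTuples m n d ↔ IsCommutingTorsionUnitaryFamily d A :=
  ⟨fun ⟨h, hcomm⟩ => ⟨fun i => (h i).1, fun i => (h i).2, hcomm⟩,
    fun hA => ⟨fun i => ⟨hA.mem_unitary i, hA.pow_eq_one i⟩, hA.commute⟩⟩

theorem spectral_bijection (m n d : ℕ) [NeZero d] :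
    Set.BijOn
      (fun (P : (Fin n → ZMod d) → Matrix (Fin m) (Fin m) ℂ) (i : Fin n) =>
        ∑ a : Fin n → ZMod d, (rootOfUnity' d) ^ (a i).val • P a)
      (ProjectiveMeasurements m n d) (CommutingTorsionTuples m n d) := by
  simp only [rootOfUnity'_pow_val]
  refine ⟨fun P hP => ?_, fun P hP Q hQ h => ?_, fun A hA => ?_⟩
  · exact mem_commutingTorsionTuples_iff.2
      (mem_projectiveMeasurements_iff.1 hP).isCommutingTorsionUnitaryFamily_sum_stdAddChar_smul
  · have separating :
        Pairwise fun x y : Fin n → ZMod d => ∃ i, stdAddChar (x i) ≠ stdAddChar (y i) :=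
      fun x y hxy => (Function.ne_iff.1 hxy).imp fun _ => ZMod.injective_stdAddChar.ne
    exact (mem_projectiveMeasurements_iff.1 hP).eq_of_sum_smul_eq
      (mem_projectiveMeasurements_iff.1 hQ) _ separating (congrFun h)
  · rw [mem_commutingTorsionTuples_iff] at hA
    exact ⟨jointSpectralProj d A,
      mem_projectiveMeasurements_iff.2 (isProjectiveMeasurement_jointSpectralProj hA),
      funext (sum_stdAddChar_smul_jointSpectralProj hA)⟩
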